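/- Let n > 0 and μ ≥ 0, and set d = (1/4)(2 − n + √((n−2)² + 8μ)). For all t > 0, x > 0, and λ ≥ 0, with p(t,x,y) = (1/(2t)) (x/y)^{(1−n/2)/2} I_{2d+n/2−1}(√(xy)/t) exp( −(x+y)/(2t) ), one has ∫_0^∞ y^d e^{−λ y} p(t,x,y) dy = x^d (1 + 2λt)^{−(2d+n/2)} exp( −λx/(1 + 2λt) ). -/

import Mathlib

open Real MeasureTheory

/-- The modified Bessel function of the first kind,
`I_ν(z) = ∑_{k=0}^∞ (z/2)^{2k+ν} / (k! Γ(k+ν+1))`. -/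
noncomputable def besselI (ν z : ℝ) : ℝ :=
  ∑' k : ℕ, (z / 2) ^ (2 * (k : ℝ) + ν) / ((Nat.factorial k : ℝ) * Real.Gamma ((k : ℝ) + ν + 1))

/-!
With `ν = 2d + n/2 - 1 = √((n-2)² + 8μ)/2 ≥ 0`, the integrand is a constant multiple of
`y^{ν/2} e^{-cy} I_ν(β√y)` with `β = √x/t` and `c = (1 + 2λt)/(2t)`. Expanding `I_ν` in its
power series turns this into a series of nonnegative Gamma integrands `y^{ν+k} e^{-cy}`, which may
be integrated term by term. The integral `Γ(ν+k+1)/c^{ν+k+1}` cancels the Gamma factor of the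
series coefficient, so what remains is the exponential series of `β²/(4c) = x/(2t(1+2λt))`,
and `e^{-x/(2t)} e^{x/(2t(1+2λt))} = e^{-λx/(1+2λt)}`.
-/

open Set Nat

lemma integrableOn_rpow_mul_exp_neg_mul {s c : ℝ} (hs : -1 < s) (hc : 0 < c) :
    IntegrableOn (fun y : ℝ => y ^ s * exp (-(c * y))) (Ioi 0) := by
  simpa [Real.rpow_one] using integrableOn_rpow_mul_exp_neg_mul_rpow hs zero_lt_one hc

lemma rpow_half_mul_besselI_mul_sqrt (ν : ℝ) {β y : ℝ} (hβ : 0 ≤ β) (hy : 0 < y) :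
    y ^ (ν / 2) * besselI ν (β * √y) =
      ∑' k : ℕ, (β / 2) ^ (2 * (k : ℝ) + ν) / (k ! * Gamma (k + ν + 1)) * y ^ (ν + k) := by
  rw [besselI, ← tsum_mul_left]
  refine tsum_congr fun k => ?_
  have hsqrt : √y ^ (2 * (k : ℝ) + ν) = y ^ ((2 * (k : ℝ) + ν) / 2) := by
    rw [sqrt_eq_rpow, ← rpow_mul hy.le]
    ring_nf
  have hy_pow : y ^ (ν / 2) * y ^ ((2 * (k : ℝ) + ν) / 2) = y ^ (ν + k) := by
    rw [← rpow_add hy]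
    ring_nf
  rw [mul_div_right_comm, mul_rpow (by positivity) (sqrt_nonneg y), hsqrt, ← hy_pow]
  ring

lemma besselI_coeff_mul_integral_rpow_mul_exp (k : ℕ) {ν β c : ℝ} (hν : -1 < ν) (hβ : 0 < β)
    (hc : 0 < c) :
    (β / 2) ^ (2 * (k : ℝ) + ν) / (k ! * Gamma (k + ν + 1))
        * ((1 / c) ^ (ν + k + 1) * Gamma (ν + k + 1))
      = (β / 2) ^ ν / c ^ (ν + 1) * ((β ^ 2 / (4 * c)) ^ k / k !) := by
  have hΓ : Gamma (ν + k + 1) ≠ 0 :=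
    (Gamma_pos_of_pos (by linarith [k.cast_nonneg (α := ℝ)])).ne'
  have hβ_pow : (β / 2) ^ (2 * (k : ℝ) + ν) = (β / 2) ^ ν * (β ^ 2 / 4) ^ k := by
    rw [show 2 * (k : ℝ) + ν = ν + (2 * k : ℕ) by push_cast; ring,
      rpow_add_natCast (by positivity), pow_mul]
    ring
  have hc_pow : (1 / c) ^ (ν + k + 1) = (c ^ (ν + 1))⁻¹ * (c ^ k)⁻¹ := by
    rw [show ν + k + 1 = ν + 1 + k by ring, rpow_add_natCast (by positivity), one_div,
      inv_rpow hc.le, inv_pow]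
  rw [show (k : ℝ) + ν + 1 = ν + k + 1 by ring, hβ_pow, hc_pow]
  field_simp
  rw [← mul_pow]
  field_simp

theorem integral_rpow_mul_exp_neg_mul_besselI_mul_sqrt {ν β c : ℝ} (hν : -1 < ν) (hβ : 0 < β)
    (hc : 0 < c) :
    ∫ y in Ioi 0, y ^ (ν / 2) * exp (-(c * y)) * besselI ν (β * √y) =
      (β / 2) ^ ν / c ^ (ν + 1) * exp (β ^ 2 / (4 * c)) := by
  set F : ℕ → ℝ → ℝ := fun k y =>
    (β / 2) ^ (2 * (k : ℝ) + ν) / (k ! * Gamma (k + ν + 1)) * (y ^ (ν + k) * exp (-(c * y)))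
  have hν_add : ∀ k : ℕ, -1 < ν + k := fun k => by linarith [k.cast_nonneg (α := ℝ)]
  have hF_int : ∀ k, Integrable (F k) (volume.restrict (Ioi 0)) := fun k =>
    (integrableOn_rpow_mul_exp_neg_mul (hν_add k) hc).const_mul _
  have hF_integral : ∀ k, ∫ y in Ioi 0, F k y =
      (β / 2) ^ ν / c ^ (ν + 1) * ((β ^ 2 / (4 * c)) ^ k / k !) := by
    intro k
    have hgamma := integral_rpow_mul_exp_neg_mul_Ioi (a := ν + k + 1) (by linarith [hν_add k]) hc
    rw [add_sub_cancel_right] at hgamma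
    rw [integral_const_mul, hgamma, besselI_coeff_mul_integral_rpow_mul_exp k hν hβ hc]
  have hF_nonneg : ∀ k, ∀ y ∈ Ioi (0 : ℝ), 0 ≤ F k y := fun k y hy => by
    have hΓ := Gamma_pos_of_pos (show 0 < (k : ℝ) + ν + 1 by linarith [hν_add k])
    exact mul_nonneg (by positivity) (mul_nonneg (rpow_nonneg (le_of_lt hy) _) (exp_pos _).le)
  have hsum : HasSum (fun k => ∫ y in Ioi 0, F k y)
      ((β / 2) ^ ν / c ^ (ν + 1) * exp (β ^ 2 / (4 * c))) := by
    rw [funext hF_integral, exp_eq_exp_ℝ]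
    exact (NormedSpace.expSeries_div_hasSum_exp (β ^ 2 / (4 * c))).mul_left
      ((β / 2) ^ ν / c ^ (ν + 1))
  have hnorm : ∀ k, ∫ y in Ioi 0, ‖F k y‖ = ∫ y in Ioi 0, F k y := fun k =>
    setIntegral_congr_fun measurableSet_Ioi fun y hy => norm_of_nonneg (hF_nonneg k y hy)
  have hseries := hasSum_integral_of_summable_integral_norm hF_int
    (hsum.summable.congr fun k => (hnorm k).symm)
  have hpointwise : ∀ y ∈ Ioi (0 : ℝ),
      y ^ (ν / 2) * exp (-(c * y)) * besselI ν (β * √y) = ∑' k, F k y := fun y hy => by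
    rw [mul_right_comm, rpow_half_mul_besselI_mul_sqrt ν hβ.le hy, ← tsum_mul_right]
    simp only [F, mul_assoc]
  rw [setIntegral_congr_fun measurableSet_Ioi hpointwise]
  exact hseries.unique hsum

lemma rpow_mul_exp_mul_squaredBesselKernel (n d ν : ℝ) {t x lam y : ℝ} (ht : t ≠ 0) (hx : 0 < x)
    (hy : 0 < y) :
    y ^ d * exp (-lam * y) * ((1 / (2 * t)) * (x / y) ^ ((1 - n / 2) / 2)
        * besselI ν (√(x * y) / t) * exp (-(x + y) / (2 * t)))
      = (1 / (2 * t)) * x ^ ((1 - n / 2) / 2) * exp (-(x / (2 * t)))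
        * (y ^ ((2 * d + n / 2 - 1) / 2) * exp (-((1 + 2 * lam * t) / (2 * t) * y))
          * besselI ν (√x / t * √y)) := by
  have hy_pow : y ^ d * (x / y) ^ ((1 - n / 2) / 2)
      = x ^ ((1 - n / 2) / 2) * y ^ ((2 * d + n / 2 - 1) / 2) := by
    rw [div_rpow hx.le hy.le, show (2 * d + n / 2 - 1) / 2 = d - (1 - n / 2) / 2 by ring,
      rpow_sub hy]
    ring
  have hexp : exp (-lam * y) * exp (-(x + y) / (2 * t))
      = exp (-(x / (2 * t))) * exp (-((1 + 2 * lam * t) / (2 * t) * y)) := by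
    rw [← exp_add, ← exp_add]
    congr 1
    field_simp
    ring
  rw [sqrt_mul hx.le, mul_div_right_comm]
  linear_combination (1 / (2 * t)) * besselI ν (√x / t * √y) *
    (exp (-lam * y) * exp (-(x + y) / (2 * t)) * hy_pow
      + x ^ ((1 - n / 2) / 2) * y ^ ((2 * d + n / 2 - 1) / 2) * hexp)

lemma squaredBesselKernel_prefactor_mul_laplace_eq {n d ν t x lam : ℝ}
    (hν : ν = 2 * d + n / 2 - 1) (ht : 0 < t) (hx : 0 < x) (hlam : 0 ≤ lam) :
    (1 / (2 * t)) * x ^ ((1 - n / 2) / 2) * exp (-(x / (2 * t)))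
        * ((√x / t / 2) ^ ν / ((1 + 2 * lam * t) / (2 * t)) ^ (ν + 1)
          * exp ((√x / t) ^ 2 / (4 * ((1 + 2 * lam * t) / (2 * t)))))
      = x ^ d * (1 + 2 * lam * t) ^ (-(2 * d + n / 2))
        * exp (-lam * x / (1 + 2 * lam * t)) := by
  have hL : 0 < 1 + 2 * lam * t := by positivity
  have hβ_pow : (√x / t / 2) ^ ν = x ^ (ν / 2) / (2 * t) ^ ν := by
    rw [div_div, div_rpow (sqrt_nonneg x) (by positivity), sqrt_eq_rpow, ← rpow_mul hx.le]
    ring_nf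
  have hc_pow : ((1 + 2 * lam * t) / (2 * t)) ^ (ν + 1)
      = (1 + 2 * lam * t) ^ (ν + 1) / ((2 * t) ^ ν * (2 * t)) := by
    rw [div_rpow hL.le (by positivity), rpow_add_one (by positivity : 2 * t ≠ 0) ν]
  have hx_pow : x ^ ((1 - n / 2) / 2) * x ^ (ν / 2) = x ^ d := by
    rw [← rpow_add hx, hν]
    ring_nf
  have hL_pow : (1 + 2 * lam * t) ^ (-(2 * d + n / 2)) = ((1 + 2 * lam * t) ^ (ν + 1))⁻¹ := by
    rw [← rpow_neg hL.le, hν]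
    ring_nf
  have hexp : exp (-(x / (2 * t))) * exp ((√x / t) ^ 2 / (4 * ((1 + 2 * lam * t) / (2 * t))))
      = exp (-lam * x / (1 + 2 * lam * t)) := by
    rw [← exp_add, div_pow, sq_sqrt hx.le]
    congr 1
    field_simp
    ring
  rw [hβ_pow, hc_pow, hL_pow, ← hx_pow, ← hexp]
  field_simp

theorem stmt_10_general (n μ d t x lam : ℝ)
    (hd : d = (1 / 4) * (2 - n + Real.sqrt ((n - 2) ^ 2 + 8 * μ)))
    (ht : 0 < t) (hx : 0 < x) (hlam : 0 ≤ lam)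
    (p : ℝ → ℝ)
    (hp : ∀ y, p y = (1 / (2 * t)) * (x / y) ^ ((1 - n / 2) / 2)
        * besselI (2 * d + n / 2 - 1) (Real.sqrt (x * y) / t)
        * Real.exp (-(x + y) / (2 * t))) :
    (∫ y in Set.Ioi (0 : ℝ), y ^ d * Real.exp (-lam * y) * p y)
      = x ^ d * (1 + 2 * lam * t) ^ (-(2 * d + n / 2))
        * Real.exp (-lam * x / (1 + 2 * lam * t)) := by
  set ν := 2 * d + n / 2 - 1 with hν_def
  have hν : -1 < ν := by rw [hν_def, hd]; linarith [sqrt_nonneg ((n - 2) ^ 2 + 8 * μ)]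
  rw [setIntegral_congr_fun measurableSet_Ioi fun y hy => by
      rw [hp y, rpow_mul_exp_mul_squaredBesselKernel n d ν ht.ne' hx hy],
    integral_const_mul,
    integral_rpow_mul_exp_neg_mul_besselI_mul_sqrt hν (by positivity) (by positivity)]
  exact squaredBesselKernel_prefactor_mul_laplace_eq hν_def ht hx hlam

/-- The generalized Laplace transform identity (4.2) for the fundamental
solution (4.3) of `u_t = 2x u_xx + n u_x - (μ/x) u` associated with the squared Bessel
process. -/
theorem stmt_10 (n μ d t x lam : ℝ) (hn : 0 < n) (hμ : 0 ≤ μ)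
    (hd : d = (1 / 4) * (2 - n + Real.sqrt ((n - 2) ^ 2 + 8 * μ)))
    (ht : 0 < t) (hx : 0 < x) (hlam : 0 ≤ lam)
    (p : ℝ → ℝ)
    (hp : ∀ y, p y = (1 / (2 * t)) * (x / y) ^ ((1 - n / 2) / 2)
        * besselI (2 * d + n / 2 - 1) (Real.sqrt (x * y) / t)
        * Real.exp (-(x + y) / (2 * t))) :
    (∫ y in Set.Ioi (0 : ℝ), y ^ d * Real.exp (-lam * y) * p y)
      = x ^ d * (1 + 2 * lam * t) ^ (-(2 * d + n / 2))
        * Real.exp (-lam * x / (1 + 2 * lam * t)) :=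
  stmt_10_general n μ d t x lam hd ht hx hlam p hp
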